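/- arXiv:1607.08226 — 2 statements merged into one kernel-verified Lean document; each statement's English description precedes it below -/
import Mathlib

section
/- Let x be a binary m-sequence of length n = 2^k − 1 (the output of one full period of a maximal-length k-stage LFSR). Then n/2 − A_N(x) = O(log² n); concretely, A_N(x) ≥ (n+1)/2 − log₂(n+1)·(log₂(n+1)−1)/2. -/
/-- `Λ` is a binary `k`-stage linear feedback shift register: a combinatorial
shift register over `𝔽₂` whose feedback function is linear. -/
def IsLFSR (k : ℕ) (Λ : (Fin k → ZMod 2) → (Fin k → ZMod 2)) : Prop :=
  ∃ F : (Fin k → ZMod 2) → ZMod 2, IsLinearMap (ZMod 2) F ∧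
    ∀ v : Fin k → ZMod 2, ∀ i : Fin k,
      Λ v i = if h : (i : ℕ) + 1 < k then v ⟨(i : ℕ) + 1, h⟩ else F v

/-- The infinite sequence `x` is produced by `Λ`. -/
def Produces {k : ℕ} (Λ : (Fin k → ZMod 2) → (Fin k → ZMod 2)) (x : ℕ → ZMod 2) : Prop :=
  ∀ n : ℕ, Λ^[n] (fun i : Fin k => x i) = fun i : Fin k => x (n + i)

/-- `N` is an eventual period of the sequence `y`. -/
def IsEvPeriod {β : Type*} (y : ℕ → β) (N : ℕ) : Prop :=
  0 < N ∧ ∃ M : ℕ, ∀ n > M, y n = y (n - N)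

/-- The eventual period of `y`: the least eventual period. -/
noncomputable def evPeriod {β : Type*} (y : ℕ → β) : ℕ :=
  sInf {N | IsEvPeriod y N}

section AN
variable {α : Type*}

/-- `p` is an accepting path of length `n` for the word `y` in the NFA with
transition relation `δ`, initial state `init` and accepting states `acc`. -/
def NFAPath {σ : Type*} (δ : σ → α → σ → Prop) (init : σ) (acc : Set σ)
    (n : ℕ) (y : ℕ → α) (p : ℕ → σ) : Prop :=
  p 0 = init ∧ p n ∈ acc ∧ ∀ i < n, δ (p i) (y i) (p (i + 1))

/-- There is an NFA with `m` states accepting the length-`n` word `x` with a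
unique accepting path of length `n`. -/
def ANWitness (m n : ℕ) (x : ℕ → α) : Prop :=
  ∃ (δ : Fin m → α → Fin m → Prop) (init : Fin m) (acc : Set (Fin m)),
    (∃ p, NFAPath δ init acc n x p) ∧
    ∀ y₁ p₁ y₂ p₂, NFAPath δ init acc n y₁ p₁ → NFAPath δ init acc n y₂ p₂ →
      (∀ i < n, y₁ i = y₂ i) ∧ (∀ i ≤ n, p₁ i = p₂ i)

/-- The nondeterministic automatic complexity of the length-`n` word `x`. -/
noncomputable def AN (n : ℕ) (x : ℕ → α) : ℕ := sInf {m | ANWitness m n x}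

end AN

/-!
Let `p` be the unique accepting path of `x` in an NFA with `m` states. Cutting `p` at repeated
states and re-gluing the pieces gives accepting paths of the same length, which by uniqueness
read `x` again; each of the two surgeries used forces `x` to have a period `0 < ℓ < n` on a
window of `k + ℓ` letters. An m-sequence has no such window, since `k` consecutive outputs form a
state of the register and the state sequence has no period shorter than `2 ^ k - 1`.

Call `t` a late visit if `p t` was visited at least twice before `t`; every state has at most two
visits that are not late. Swapping the two latest cycles before a late visit `t` shows that its
gap `t - prevVisit p t` lies in `(0, k)`, and repeating one cycle in place of a later one of the
same length shows that late visits with equal gaps lie within `k` of each other. Hence there are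
at most `k (k - 1)` late visits, and `n + 1 ≤ 2 m + k (k - 1)`.
-/

open Finset

section Periods

variable {α : Type*}

-- the factor `x[a, a + w + ℓ)` has period `ℓ`
def HasPeriodOn (x : ℕ → α) (ℓ a w : ℕ) : Prop :=
  ∀ u, a ≤ u → u < a + w → x (u + ℓ) = x u

theorem HasPeriodOn.mono {x : ℕ → α} {ℓ a w w' : ℕ} (h : HasPeriodOn x ℓ a w) (hw : w' ≤ w) :
    HasPeriodOn x ℓ a w' :=
  fun u hau hu => h u hau (by omega)

end Periods

theorem isEvPeriod_iterate {β : Type*} {f : β → β} {v : β} {a ℓ : ℕ} (hℓ : 0 < ℓ)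
    (h : f^[a + ℓ] v = f^[a] v) : IsEvPeriod (fun t => f^[t] v) ℓ := by
  refine ⟨hℓ, a + ℓ, fun t ht => ?_⟩
  obtain ⟨s, rfl⟩ : ∃ s, t = s + (a + ℓ) := ⟨t - (a + ℓ), by omega⟩
  show f^[s + (a + ℓ)] v = f^[s + (a + ℓ) - ℓ] v
  rw [show s + (a + ℓ) - ℓ = s + a by omega, Function.iterate_add_apply, h,
    ← Function.iterate_add_apply]

theorem Produces.not_hasPeriodOn {k : ℕ} {Λ : (Fin k → ZMod 2) → (Fin k → ZMod 2)}
    {x : ℕ → ZMod 2} (hx : Produces Λ x)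
    (hP : evPeriod (fun t => Λ^[t] (fun i : Fin k => x i)) = 2 ^ k - 1)
    {ℓ a : ℕ} (hℓ : 0 < ℓ) (hℓP : ℓ < 2 ^ k - 1) : ¬ HasPeriodOn x ℓ a k := by
  intro hper
  have hstate : Λ^[a + ℓ] (fun i : Fin k => x i) = Λ^[a] (fun i : Fin k => x i) := by
    rw [hx, hx]
    funext i
    rw [add_right_comm, hper (a + i) (by omega) (by omega)]
  have : evPeriod (fun t => Λ^[t] (fun i : Fin k => x i)) ≤ ℓ :=
    Nat.sInf_le (isEvPeriod_iterate hℓ hstate)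
  rw [hP] at this
  omega

theorem Finset.card_le_of_forall_lt_add {s : Finset ℕ} {k : ℕ}
    (h : ∀ a ∈ s, ∀ b ∈ s, a ≤ b → b < a + k) : #s ≤ k := by
  rcases s.eq_empty_or_nonempty with rfl | hs
  · simp
  calc #s ≤ #(Ico (s.min' hs) (s.min' hs + k)) := card_le_card fun b hb => by
        have := h _ (s.min'_mem hs) b hb (s.min'_le b hb)
        simp only [mem_Ico]
        exact ⟨s.min'_le b hb, this⟩
    _ = k := by simp

theorem card_le_mul_pred_of_close_fibers {S : Finset ℕ} {d : ℕ → ℕ} {k : ℕ}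
    (hd : ∀ t ∈ S, d t ∈ Ioo 0 k)
    (hclose : ∀ t ∈ S, ∀ t' ∈ S, d t = d t' → t < t' → t' - t < k) : #S ≤ k * (k - 1) := by
  classical
  calc #S ≤ k * #(Ioo 0 k) := card_le_mul_card_image_of_maps_to hd k fun ℓ _ =>
        card_le_of_forall_lt_add fun t ht t' ht' htt' => by
          simp only [mem_filter] at ht ht'
          rcases htt'.eq_or_lt with rfl | hlt
          · have := mem_Ioo.mp (hd t ht.1)
            omega
          · have := hclose t ht.1 t' ht'.1 (ht.2.trans ht'.2.symm) hlt
            omega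
    _ = k * (k - 1) := by simp

section Visits

variable {σ : Type*} (p : ℕ → σ)

def VisitedTwiceBefore (t : ℕ) : Prop :=
  ∃ t₁ t₂, t₁ < t₂ ∧ t₂ < t ∧ p t₁ = p t ∧ p t₂ = p t

theorem card_range_le_two_mul_card_add [Fintype σ] [DecidablePred (VisitedTwiceBefore p)]
    (N : ℕ) : N ≤ 2 * Fintype.card σ + #{t ∈ range N | VisitedTwiceBefore p t} := by
  have hsplit := card_filter_add_card_filter_not (s := range N) (fun t => VisitedTwiceBefore p t)
  have hfirst : #{t ∈ range N | ¬ VisitedTwiceBefore p t} ≤ 2 * Fintype.card σ := by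
    classical
    -- a position is determined by its state and by whether that state was visited before
    let visit : ℕ → σ × Bool := fun t => (p t, decide (∃ u < t, p u = p t))
    have key : ∀ t t', t < t' → visit t = visit t' → VisitedTwiceBefore p t' := by
      intro t t' htt' h
      simp only [visit, Prod.mk.injEq, decide_eq_decide] at h
      obtain ⟨u, hut, hpu⟩ := h.2.mpr ⟨t, htt', h.1⟩
      exact ⟨u, t, hut, htt', hpu.trans h.1, h.1⟩
    have hinj : Set.InjOn visit ↑{t ∈ range N | ¬ VisitedTwiceBefore p t} := by
      intro t ht t' ht' h
      simp only [coe_filter, Set.mem_ofPred_eq] at ht ht'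
      by_contra hne
      rcases Nat.lt_or_gt_of_ne hne with hlt | hlt
      exacts [ht'.2 (key t t' hlt h), ht.2 (key t' t hlt h.symm)]
    calc _ ≤ #(univ : Finset (σ × Bool)) :=
          card_le_card_of_injOn visit (fun _ _ => mem_coe.mpr (mem_univ _)) hinj
      _ = 2 * Fintype.card σ := by simp [mul_comm]
  rw [card_range] at hsplit
  omega

variable [DecidableEq σ]

def prevVisit (t : ℕ) : ℕ := Nat.findGreatest (fun u => p u = p t) (t - 1)

variable {p}

theorem prevVisit_lt {t : ℕ} (ht : 0 < t) : prevVisit p t < t :=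
  (Nat.findGreatest_le _).trans_lt (by omega)

theorem le_prevVisit {u t : ℕ} (hut : u < t) (hpu : p u = p t) : u ≤ prevVisit p t :=
  Nat.le_findGreatest (by omega) hpu

theorem apply_prevVisit {u t : ℕ} (hut : u < t) (hpu : p u = p t) : p (prevVisit p t) = p t :=
  Nat.findGreatest_spec (P := fun u => p u = p t) (by omega) hpu

end Visits

section Surgery

variable {α σ : Type*} {δ : σ → α → σ → Prop} {init : σ} {acc : Set σ} {n : ℕ}
  {x : ℕ → α} {p : ℕ → σ}

theorem NFAPath.reindex (hp : NFAPath δ init acc n x p) {g : ℕ → ℕ}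
    (h0 : p (g 0) = p 0) (hn : g n = n) (hlt : ∀ t < n, g t < n)
    (hstep : ∀ t < n, p (g (t + 1)) = p (g t + 1)) :
    NFAPath δ init acc n (x ∘ g) (p ∘ g) := by
  obtain ⟨hp0, hpn, hpt⟩ := hp
  refine ⟨h0.trans hp0, by simpa [hn] using hpn, fun t ht => ?_⟩
  simpa [hstep t ht] using hpt (g t) (hlt t ht)

theorem NFAPath.hasPeriodOn_of_rotate (hp : NFAPath δ init acc n x p)
    (huniq : ∀ y q, NFAPath δ init acc n y q → ∀ t < n, y t = x t)
    {a b c : ℕ} (hab : a ≤ b) (hbc : b ≤ c) (hcn : c ≤ n) (hpab : p a = p b)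
    (hpbc : p b = p c) : HasPeriodOn x (b - a) a (c - b) := by
  -- traverse the two cycles `[a, b)` and `[b, c)` at the state `p a` in the opposite order
  let g : ℕ → ℕ := fun t =>
    if a ≤ t ∧ t < a + (c - b) then t + (b - a)
    else if a + (c - b) ≤ t ∧ t < c then t - (c - b) else t
  have hA : ∀ u, u = a ∨ u = b ∨ u = c → p u = p a := by
    rintro u (rfl | rfl | rfl)
    exacts [rfl, hpab.symm, (hpab.trans hpbc).symm]
  have hE : ∀ u v, u = v ∨ ((u = a ∨ u = b ∨ u = c) ∧ (v = a ∨ v = b ∨ v = c)) → p u = p v := by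
    rintro u v (rfl | ⟨hu, hv⟩)
    exacts [rfl, (hA u hu).trans (hA v hv).symm]
  have hy := huniq _ _ (hp.reindex (g := g)
    (by simp only [g]; split_ifs <;> apply hE <;> omega)
    (by simp only [g]; split_ifs <;> omega)
    (fun t ht => by simp only [g]; split_ifs <;> omega)
    (fun t ht => by simp only [g]; split_ifs <;> apply hE <;> omega))
  intro u hau hu
  simpa [g, hau, hu] using hy u (by omega)

theorem NFAPath.hasPeriodOn_of_shift (hp : NFAPath δ init acc n x p)
    (huniq : ∀ y q, NFAPath δ init acc n y q → ∀ t < n, y t = x t)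
    {i j i' j' : ℕ} (hij : i ≤ j) (hjj' : j ≤ j') (hj'n : j' ≤ n) (hlen : j - i = j' - i')
    (hpij : p i = p j) (hpij' : p i' = p j') : HasPeriodOn x (j - i) i (j' - j) := by
  -- repeat the cycle `[i, j)` and drop the cycle `[i', j')` of the same length
  let g : ℕ → ℕ := fun t => if j ≤ t ∧ t < j' then t - (j - i) else t
  have hE : ∀ u v, u = v ∨ (u = i ∧ v = j) ∨ (u = j' ∧ v = i') → p u = p v := by
    rintro u v (rfl | ⟨rfl, rfl⟩ | ⟨rfl, rfl⟩)
    exacts [rfl, hpij, hpij'.symm]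
  have hy := huniq _ _ (hp.reindex (g := g)
    (by simp only [g]; split_ifs <;> apply hE <;> omega)
    (by simp only [g]; split_ifs <;> omega)
    (fun t ht => by simp only [g]; split_ifs <;> omega)
    (fun t ht => by simp only [g]; split_ifs <;> apply hE <;> omega))
  intro u hiu hu
  have := hy (u + (j - i)) (by omega)
  simp only [g, Function.comp_apply] at this
  rw [if_pos (by omega), Nat.add_sub_cancel] at this
  exact this.symm

variable [DecidableEq σ] {k : ℕ}

theorem NFAPath.sub_prevVisit_lt (hp : NFAPath δ init acc n x p)
    (huniq : ∀ y q, NFAPath δ init acc n y q → ∀ t < n, y t = x t)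
    (hwin : ∀ ℓ a, 0 < ℓ → ℓ < n → ¬ HasPeriodOn x ℓ a k)
    {t : ℕ} (htn : t ≤ n) (ht : VisitedTwiceBefore p t) : t - prevVisit p t < k := by
  obtain ⟨t₁, t₂, h12, h2t, hpt₁, hpt₂⟩ := ht
  have hle := le_prevVisit h2t hpt₂
  have hlt := prevVisit_lt (p := p) (by omega : 0 < t)
  have hpj := apply_prevVisit h2t hpt₂
  by_contra! hk
  exact hwin _ t₁ (by omega) (by omega)
    ((hp.hasPeriodOn_of_rotate huniq (by omega) hlt.le htn (hpt₁.trans hpj.symm) hpj).mono hk)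

theorem NFAPath.sub_lt_of_sub_prevVisit_eq (hp : NFAPath δ init acc n x p)
    (huniq : ∀ y q, NFAPath δ init acc n y q → ∀ t < n, y t = x t)
    (hwin : ∀ ℓ a, 0 < ℓ → ℓ < n → ¬ HasPeriodOn x ℓ a k)
    {t t' : ℕ} (htt' : t < t') (ht'n : t' ≤ n) (ht : ∃ u < t, p u = p t)
    (ht' : ∃ u < t', p u = p t') (hgap : t - prevVisit p t = t' - prevVisit p t') :
    t' - t < k := by
  obtain ⟨u, hut, hpu⟩ := ht
  obtain ⟨u', hut', hpu'⟩ := ht'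
  have hlt := prevVisit_lt (p := p) (by omega : 0 < t)
  have hlt' := prevVisit_lt (p := p) (by omega : 0 < t')
  by_contra! hk
  exact hwin _ _ (by omega) (by omega)
    ((hp.hasPeriodOn_of_shift huniq hlt.le htt'.le ht'n hgap (apply_prevVisit hut hpu)
      (apply_prevVisit hut' hpu')).mono (by omega))

end Surgery

theorem ANWitness.succ_le_two_mul_add {α : Type*} {m n k : ℕ} {x : ℕ → α}
    (hm : ANWitness m n x) (hwin : ∀ ℓ a, 0 < ℓ → ℓ < n → ¬ HasPeriodOn x ℓ a k) :
    n + 1 ≤ 2 * m + k * (k - 1) := by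
  classical
  obtain ⟨δ, init, acc, ⟨p, hp⟩, hu⟩ := hm
  have huniq : ∀ y q, NFAPath δ init acc n y q → ∀ t < n, y t = x t :=
    fun y q hq => (hu y q x p hq hp).1
  have hlater : #{t ∈ range (n + 1) | VisitedTwiceBefore p t} ≤ k * (k - 1) := by
    refine card_le_mul_pred_of_close_fibers (d := fun t => t - prevVisit p t) (fun t ht => ?_)
      (fun t ht t' ht' hgap htt' => ?_) <;> simp only [mem_filter, mem_range] at *
    · obtain ⟨_, _, -, h2t, -, -⟩ := ht.2
      have := prevVisit_lt (p := p) (by omega : 0 < t)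
      exact mem_Ioo.mpr ⟨by omega, hp.sub_prevVisit_lt huniq hwin (by omega) ht.2⟩
    · obtain ⟨_, t₂, -, h2t, -, hpt₂⟩ := ht.2
      obtain ⟨_, t₂', -, h2t', -, hpt₂'⟩ := ht'.2
      exact hp.sub_lt_of_sub_prevVisit_eq huniq hwin htt' (by omega) ⟨t₂, h2t, hpt₂⟩
        ⟨t₂', h2t', hpt₂'⟩ hgap
  have := card_range_le_two_mul_card_add p (n + 1)
  rw [Fintype.card_fin] at this
  omega

theorem anWitness_succ {α : Type*} (n : ℕ) (x : ℕ → α) : ANWitness (n + 1) n x := by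
  let δ : Fin (n + 1) → α → Fin (n + 1) → Prop := fun s a s' => (s' : ℕ) = s + 1 ∧ a = x s
  have hchain : ∀ y q, NFAPath δ 0 {s | (s : ℕ) = n} n y q →
      (∀ i ≤ n, (q i : ℕ) = i) ∧ ∀ i < n, y i = x i := by
    rintro y q ⟨hq0, -, hstep⟩
    have hq : ∀ i ≤ n, (q i : ℕ) = i := by
      intro i
      induction i with
      | zero => simp [hq0]
      | succ i ih => intro hi; rw [(hstep i (by omega)).1, ih (by omega)]
    exact ⟨hq, fun i hi => by rw [(hstep i hi).2, hq i hi.le]⟩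
  refine ⟨δ, 0, {s | (s : ℕ) = n}, ⟨fun t => ⟨min t n, by omega⟩, rfl, by simp,
    fun t ht => ⟨by simp; omega, by simp [ht.le]⟩⟩, fun y₁ p₁ y₂ p₂ h₁ h₂ => ?_⟩
  obtain ⟨hq₁, hy₁⟩ := hchain y₁ p₁ h₁
  obtain ⟨hq₂, hy₂⟩ := hchain y₂ p₂ h₂
  exact ⟨fun i hi => (hy₁ i hi).trans (hy₂ i hi).symm,
    fun i hi => Fin.ext ((hq₁ i hi).trans (hq₂ i hi).symm)⟩

theorem stmt_11_general (k : ℕ) (hk : 0 < k) (Λ : (Fin k → ZMod 2) → (Fin k → ZMod 2))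
    (x : ℕ → ZMod 2) (hx : Produces Λ x)
    (hP : evPeriod (fun t => Λ^[t] (fun i : Fin k => x i)) = 2 ^ k - 1)
    (n : ℕ) (hn : n = 2 ^ k - 1) :
    (AN n x : ℝ) ≥ (n + 1) / 2 -
      Real.logb 2 (n + 1) * (Real.logb 2 (n + 1) - 1) / 2 := by
  have hAN : ANWitness (AN n x) n x :=
    Nat.sInf_mem (s := {m | ANWitness m n x}) ⟨n + 1, anWitness_succ n x⟩
  have hbound : n + 1 ≤ 2 * AN n x + k * (k - 1) :=
    hAN.succ_le_two_mul_add fun ℓ a hℓ hℓn => hx.not_hasPeriodOn hP hℓ (hn ▸ hℓn)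
  have hn1 : (n : ℝ) + 1 = 2 ^ k := by
    exact_mod_cast (show n + 1 = 2 ^ k by have := Nat.one_le_two_pow (n := k); omega)
  have hlog : Real.logb 2 ((n : ℝ) + 1) = k := by
    rw [hn1, Real.logb_pow, Real.logb_self_eq_one one_lt_two, mul_one]
  have hbound' : (n : ℝ) + 1 ≤ 2 * AN n x + k * (k - 1) := by
    rw [← Nat.cast_pred hk]
    exact_mod_cast hbound
  rw [hlog]
  linarith

/-- if `x` is an `m`-sequence of length `n = 2^k − 1` (one full
period of a maximal-length `k`-stage LFSR), then
`A_N(x) ≥ (n+1)/2 − log₂(n+1)·(log₂(n+1)−1)/2`; in particular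
`n/2 − A_N(x) = O(log² n)`. -/
theorem stmt_11 (k : ℕ) (hk : 0 < k) (Λ : (Fin k → ZMod 2) → (Fin k → ZMod 2))
    (hΛ : IsLFSR k Λ) (x : ℕ → ZMod 2) (hx : Produces Λ x)
    (hP : evPeriod (fun t => Λ^[t] (fun i : Fin k => x i)) = 2 ^ k - 1)
    (n : ℕ) (hn : n = 2 ^ k - 1) :
    (AN n x : ℝ) ≥ (n + 1) / 2 -
      Real.logb 2 (n + 1) * (Real.logb 2 (n + 1) - 1) / 2 :=
  stmt_11_general k hk Λ x hx hP n hn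
end

section
/- Let s be a path-unique state sequence corresponding to a word x of length n such that every u-th power α^u occurring contiguously in x satisfies u ≤ f(|α|) for a non-increasing f : ℕ → ℕ. If the distinct states q₁,...,q_Q of s are ordered by increasing period and a_i is the number of occurrences of q_i in s, then a_i ≤ b_i, where (b₁,b₂,...) = (f(1)+1, f(2)+1, f(2)+1, ..., with f(i)+1 repeated i times, ...). -/
/-- The period of a state `st` in the state sequence `s₀…sₙ`:
`min {k − j : s_k = s_j = st, j < k}` if `st` occurs at least twice, `∞` otherwise. -/
noncomputable def statePeriod {σ : Type*} (n : ℕ) (s : ℕ → σ) (st : σ) : ℕ∞ :=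
  sInf {t : ℕ∞ | ∃ j k : ℕ, j < k ∧ k ≤ n ∧ s j = st ∧ s k = st ∧ ((k - j : ℕ) : ℕ∞) = t}

/-- The bounding sequence `(b₁, b₂, …) = (f(1)+1, f(2)+1, f(2)+1, …)` in which
`f(i)+1` is repeated `i` times: `b i = f(m) + 1` where `m` is least with
`i ≤ m(m+1)/2` (1-based indexing). -/
noncomputable def bSeq (f : ℕ → ℕ) (i : ℕ) : ℕ :=
  f (sInf {m : ℕ | i ≤ m * (m + 1) / 2}) + 1


/-!
Path-uniqueness makes `s` rigid: any run of the same length between the same states can be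
spliced into `s`, so it must be `s` itself. Splicing the two loops `q ⋯ q ⋯ q` in the other
order shows that between the first and last occurrence of a state `q` of period `p` the word `x`
has period `p`; as these occurrences are at least `p` apart, `x` contains an `(a - 1)`-th power
of a word of length `p`, so `a ≤ f p + 1`. Shifting `s` along a loop of length `e` shows that a
state of period at most `p` is determined by the length `e ≤ p` of a shortest loop at it and the
residue of its start modulo `e`, so at most `p (p + 1) / 2` states have period at most `p`.
As the states are sorted by period, this gives `i + 1 ≤ p (p + 1) / 2` for `q_i`, so `p` is at
least the index `m` in the definition of `b_{i+1}`, and `f p ≤ f m`.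
-/

open Finset

def IsUniqueAcceptingPath {α σ : Type*} (δ : σ → α → σ → Prop) (init : σ) (acc : Set σ)
    (n : ℕ) (x : ℕ → α) (s : ℕ → σ) : Prop :=
  NFAPath δ init acc n x s ∧
    ∀ y p, NFAPath δ init acc n y p → (∀ i < n, y i = x i) ∧ ∀ i ≤ n, p i = s i

open Classical in
noncomputable def occurrences {σ : Type*} (n : ℕ) (s : ℕ → σ) (st : σ) : Finset ℕ :=
  (range (n + 1)).filter (s · = st)

section StatePeriod
variable {σ : Type*} {n : ℕ} {s : ℕ → σ} {st : σ}

theorem mem_occurrences {i : ℕ} : i ∈ occurrences n s st ↔ i ≤ n ∧ s i = st := by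
  simp [occurrences]

theorem ncard_setOf_eq_card_occurrences :
    {i | i ≤ n ∧ s i = st}.ncard = (occurrences n s st).card := by
  rw [← Set.ncard_coe_finset]
  congr
  ext i
  simp [mem_occurrences]

theorem statePeriod_le {j e : ℕ} (he : 0 < e) (hn : j + e ≤ n) (hj : s j = st)
    (hje : s (j + e) = st) : statePeriod n s st ≤ e :=
  sInf_le ⟨j, j + e, by omega, hn, hj, hje, by simp⟩

theorem exists_loop_eq_statePeriod (h : statePeriod n s st ≠ ⊤) :
    ∃ j e, 0 < e ∧ j + e ≤ n ∧ s j = st ∧ s (j + e) = st ∧ statePeriod n s st = e := by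
  have hne : {t : ℕ∞ | ∃ j k : ℕ, j < k ∧ k ≤ n ∧ s j = st ∧ s k = st ∧
      ((k - j : ℕ) : ℕ∞) = t}.Nonempty := by
    by_contra hempty
    exact h (by rw [statePeriod, Set.not_nonempty_iff_eq_empty.mp hempty, sInf_empty])
  obtain ⟨j, k, hjk, hk, hj, hk', hper⟩ := csInf_mem hne
  exact ⟨j, k - j, by omega, by omega, hj, by rwa [Nat.add_sub_cancel' hjk.le], hper.symm⟩

theorem card_occurrences_le_one (h : statePeriod n s st = ⊤) :
    (occurrences n s st).card ≤ 1 := by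
  refine card_le_one.mpr fun u hu v hv => ?_
  rw [mem_occurrences] at hu hv
  by_contra huv
  wlog huv' : u < v generalizing u v
  · exact this v hv u hu (Ne.symm huv) (by omega)
  have := statePeriod_le (n := n) (j := u) (e := v - u) (by omega) (by omega) hu.2
    (by rw [Nat.add_sub_cancel' huv'.le]; exact hv.2)
  exact ENat.natCast_ne_top _ (top_le_iff.mp (h ▸ this))

end StatePeriod

theorem card_sub_one_mul_le_of_separated {T : Finset ℕ} {p lo hi : ℕ}
    (hsep : ∀ u ∈ T, ∀ v ∈ T, u < v → p ≤ v - u) (hmem : ∀ t ∈ T, lo ≤ t ∧ t ≤ hi) :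
    (T.card - 1) * p ≤ hi - lo := by
  induction T using Finset.induction_on_max generalizing hi with
  | empty => simp
  | insert a T hlt ih =>
    rw [card_insert_of_notMem fun ha => lt_irrefl a (hlt a ha), Nat.add_sub_cancel]
    rcases T.eq_empty_or_nonempty with rfl | ⟨t, ht⟩
    · simp
    have hsepT : ∀ u ∈ T, ∀ v ∈ T, u < v → p ≤ v - u := fun u hu v hv =>
      hsep u (mem_insert_of_mem hu) v (mem_insert_of_mem hv)
    have hgap : ∀ u ∈ T, p ≤ a - u := fun u hu =>
      hsep u (mem_insert_of_mem hu) a (mem_insert_self a T) (hlt u hu)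
    have hIH := ih hsepT (hi := a - p) fun u hu =>
      ⟨(hmem u (mem_insert_of_mem hu)).1, by have := hgap u hu; have := hlt u hu; omega⟩
    have hlo := (hmem t (mem_insert_of_mem ht)).1
    have hta := hgap t ht
    have hthi := (hmem a (mem_insert_self a T)).2
    have hcard : T.card * p = (T.card - 1) * p + p := by
      rw [← Nat.succ_mul, Nat.succ_eq_add_one, Nat.sub_add_cancel (card_pos.mpr ⟨t, ht⟩)]
    have := hlt t ht
    omega

theorem apply_add_eq_apply_add_mod {α : Type*} {x : ℕ → α} {j p L : ℕ}
    (h : ∀ k, k + p < L → x (j + k) = x (j + k + p)) :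
    ∀ m < L, x (j + m) = x (j + m % p) := by
  rcases Nat.eq_zero_or_pos p with rfl | hp
  · simp
  intro m
  induction m using Nat.strong_induction_on with
  | _ m ih =>
    intro hm
    rcases Nat.lt_or_ge m p with hmp | hmp
    · rw [Nat.mod_eq_of_lt hmp]
    · calc x (j + m) = x (j + (m - p) + p) := by rw [add_assoc, Nat.sub_add_cancel hmp]
        _ = x (j + (m - p)) := (h (m - p) (by omega)).symm
        _ = x (j + (m - p) % p) := ih (m - p) (by omega) (by omega)
        _ = x (j + m % p) := by rw [← Nat.mod_eq_sub_mod hmp]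

namespace IsUniqueAcceptingPath
variable {α σ : Type*} {δ : σ → α → σ → Prop} {init : σ} {acc : Set σ} {n : ℕ}
  {x : ℕ → α} {s : ℕ → σ}

theorem eq_of_run (hs : IsUniqueAcceptingPath δ init acc n x s) {a L : ℕ} (haL : a + L ≤ n)
    {w : ℕ → α} {g : ℕ → σ} (hrun : ∀ i < L, δ (g i) (w i) (g (i + 1)))
    (h0 : g 0 = s a) (hL : g L = s (a + L)) :
    (∀ i ≤ L, g i = s (a + i)) ∧ ∀ i < L, w i = x (a + i) := by
  obtain ⟨⟨hinit, hacc, hstep⟩, huniq⟩ := hs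
  let p : ℕ → σ := fun i => if a < i ∧ i < a + L then g (i - a) else s i
  let y : ℕ → α := fun i => if a ≤ i ∧ i < a + L then w (i - a) else x i
  have hp_in : ∀ i, a ≤ i → i ≤ a + L → p i = g (i - a) := by
    intro i h1 h2
    by_cases h : a < i ∧ i < a + L
    · simp only [p, if_pos h]
    · rcases (show i = a ∨ i = a + L by omega) with rfl | rfl
      · simp only [p, if_neg h, Nat.sub_self, h0]
      · simp only [p, if_neg h, Nat.add_sub_cancel_left, hL]
  have hp_out : ∀ i, i ≤ a ∨ a + L ≤ i → p i = s i := fun i h => by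
    simp only [p]
    exact if_neg (by omega)
  have hpath : NFAPath δ init acc n y p := by
    refine ⟨by rw [hp_out 0 (by omega), hinit], by rw [hp_out n (by omega)]; exact hacc,
      fun i hi => ?_⟩
    by_cases h : a ≤ i ∧ i < a + L
    · rw [hp_in i h.1 (by omega), hp_in (i + 1) (by omega) (by omega),
        show i + 1 - a = i - a + 1 by omega]
      simp only [y, if_pos h]
      exact hrun _ (by omega)
    · rw [hp_out i (by omega), hp_out (i + 1) (by omega)]
      simp only [y, if_neg h]
      exact hstep i hi
  obtain ⟨hy, hps⟩ := huniq y p hpath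
  refine ⟨fun i hi => ?_, fun i hi => ?_⟩
  · rw [← hps (a + i) (by omega), hp_in _ (by omega) (by omega), Nat.add_sub_cancel_left]
  · rw [← hy (a + i) (by omega)]
    simp only [y, if_pos (show a ≤ a + i ∧ a + i < a + L by omega), Nat.add_sub_cancel_left]

theorem shift (hs : IsUniqueAcceptingPath δ init acc n x s) {a a' L : ℕ} (ha : a + L ≤ n)
    (ha' : a' + L ≤ n) (h0 : s a' = s a) (hL : s (a' + L) = s (a + L)) :
    ∀ i ≤ L, s (a' + i) = s (a + i) :=
  (hs.eq_of_run ha (w := fun i => x (a' + i))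
    (fun i hi => by simpa only [add_assoc] using hs.1.2.2 (a' + i) (by omega)) h0 hL).1

theorem swap_loops (hs : IsUniqueAcceptingPath δ init acc n x s) {t a b : ℕ} (hn : t + a + b ≤ n)
    (ha : s (t + a) = s t) (hb : s (t + a + b) = s t) :
    (∀ i < b, x (t + a + i) = x (t + i)) ∧ ∀ i < a, x (t + b + i) = x (t + i) := by
  have hstep := hs.1.2.2
  -- the run through the second loop first
  let g : ℕ → σ := fun i => if i < b then s (t + a + i) else s (t + (i - b))
  let w : ℕ → α := fun i => if i < b then x (t + a + i) else x (t + (i - b))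
  have hrun : ∀ i < b + a, δ (g i) (w i) (g (i + 1)) := by
    intro i hi
    by_cases hib : i < b
    · have := hstep (t + a + i) (by omega)
      by_cases hib' : i + 1 < b
      · simpa only [g, w, if_pos hib, if_pos hib', add_assoc] using this
      · simp only [g, w, if_pos hib, if_neg hib', show i + 1 - b = 0 by omega, add_zero]
        rwa [← hb, show b = i + 1 by omega, ← add_assoc]
    · simp only [g, w, if_neg hib, if_neg (show ¬ i + 1 < b by omega),
        show i + 1 - b = i - b + 1 by omega, ← add_assoc]
      exact hstep _ (by omega)
  have h0 : g 0 = s t := by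
    by_cases hb0 : 0 < b
    · simp only [g, if_pos hb0, add_zero, ha]
    · simp only [g, if_neg hb0, Nat.zero_sub, add_zero]
  have hL : g (b + a) = s (t + (b + a)) := by
    simp only [g, if_neg (show ¬ b + a < b by omega), Nat.add_sub_cancel_left, ha]
    rw [show t + (b + a) = t + a + b by omega, hb]
  obtain ⟨-, hw⟩ := hs.eq_of_run (by omega) hrun h0 hL
  refine ⟨fun i hi => ?_, fun i hi => ?_⟩
  · simpa only [w, if_pos hi] using hw i (by omega)
  · have := hw (b + i) (by omega)
    simp only [w, if_neg (show ¬ b + i < b by omega), Nat.add_sub_cancel_left] at this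
    rw [← add_assoc] at this
    exact this.symm

theorem eq_of_loops (hs : IsUniqueAcceptingPath δ init acc n x s) {e j j' : ℕ} (hjj' : j ≤ j')
    (hmod : j ≡ j' [MOD e]) (hn : j' + e ≤ n) (hj : s (j + e) = s j)
    (hj' : s (j' + e) = s j') : s j' = s j := by
  have hper := hs.shift (a := j) (a' := j + e) (L := j' - j) (by omega) (by omega) hj
    (by rw [show j + e + (j' - j) = j' + e by omega, hj', Nat.add_sub_cancel' hjj'])
  have hmul : ∀ c, e * c ≤ j' - j → s (j + e * c) = s j := by
    intro c
    induction c with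
    | zero => simp
    | succ c ih =>
      intro hc
      have hc' : e * c ≤ j' - j := le_trans (Nat.mul_le_mul_left e c.le_succ) hc
      rw [mul_add_one, show j + (e * c + e) = j + e + e * c by ring, hper _ hc', ih hc']
  obtain ⟨c, hc⟩ := (Nat.modEq_iff_dvd' hjj').mp hmod
  rw [← hmul c hc.ge, ← hc, Nat.add_sub_cancel' hjj']

theorem periodic_between_loops (hs : IsUniqueAcceptingPath δ init acc n x s)
    {lo j p hi : ℕ} (hlo : lo ≤ j) (hhi : j + p ≤ hi) (hn : hi ≤ n) (hj : s j = s lo)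
    (hjp : s (j + p) = s lo) (hhi' : s hi = s lo) :
    ∀ k, k + p < hi - lo → x (lo + k) = x (lo + k + p) := by
  intro k hk
  by_cases hkj : lo + k < j
  · have := (hs.swap_loops (t := lo) (a := j - lo) (b := p) (by omega)
      (by rwa [Nat.add_sub_cancel' hlo]) (by rw [Nat.add_sub_cancel' hlo, hjp])).2 k (by omega)
    rwa [add_right_comm, eq_comm] at this
  · have := (hs.swap_loops (t := j) (a := p) (b := hi - j - p) (by omega) (by rw [hjp, hj])
      (by rw [show j + p + (hi - j - p) = hi by omega, hhi', hj])).1 (lo + k - j) (by omega)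
    rwa [show j + p + (lo + k - j) = lo + k + p by omega,
      show j + (lo + k - j) = lo + k by omega, eq_comm] at this

theorem exists_pow_of_statePeriod_eq (hs : IsUniqueAcceptingPath δ init acc n x s) {st : σ}
    {p : ℕ} (hp : statePeriod n s st = p) :
    ∃ j, j + ((occurrences n s st).card - 1) * p ≤ n ∧
      ∀ m < ((occurrences n s st).card - 1) * p, x (j + m) = x (j + m % p) := by
  set T := occurrences n s st
  obtain ⟨j, e, -, hjn, hj, hje, hpe⟩ := exists_loop_eq_statePeriod (hp ▸ ENat.natCast_ne_top p)
  obtain rfl : e = p := by exact_mod_cast hpe.symm.trans hp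
  have hjT : j ∈ T := mem_occurrences.mpr ⟨by omega, hj⟩
  have hjeT : j + e ∈ T := mem_occurrences.mpr ⟨hjn, hje⟩
  have hne : T.Nonempty := ⟨j, hjT⟩
  have hsep : ∀ u ∈ T, ∀ v ∈ T, u < v → e ≤ v - u := fun u hu v hv huv => by
    rw [mem_occurrences] at hu hv
    have := statePeriod_le (n := n) (s := s) (j := u) (e := v - u) (by omega) (by omega) hu.2
      (by rw [Nat.add_sub_cancel' huv.le]; exact hv.2)
    exact_mod_cast hp ▸ this
  have hloT := min'_mem T hne
  have hhiT := max'_mem T hne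
  rw [mem_occurrences] at hloT hhiT
  have hgap := card_sub_one_mul_le_of_separated (lo := T.min' hne) (hi := T.max' hne) hsep
    (fun t ht => ⟨min'_le T t ht, le_max' T t ht⟩)
  have hper := hs.periodic_between_loops (min'_le T j hjT) (le_max' T _ hjeT) hhiT.1
    (hj.trans hloT.2.symm) (hje.trans hloT.2.symm) (hhiT.2.trans hloT.2.symm)
  have hlohi := min'_le T _ (max'_mem T hne)
  exact ⟨T.min' hne, by omega, fun m hm => apply_add_eq_apply_add_mod hper m (by omega)⟩

theorem card_le_of_statePeriod_le (hs : IsUniqueAcceptingPath δ init acc n x s)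
    {S : Finset σ} {p : ℕ} (hS : ∀ st ∈ S, statePeriod n s st ≤ p) : S.card ≤ p * (p + 1) / 2 := by
  have hloop : ∀ st ∈ S, ∃ e j, 0 < e ∧ e ≤ p ∧ j + e ≤ n ∧ s j = st ∧ s (j + e) = st := by
    intro st hst
    obtain ⟨j, e, he, hn, hj, hje, hper⟩ :=
      exists_loop_eq_statePeriod (ne_top_of_le_ne_top (ENat.natCast_ne_top p) (hS st hst))
    exact ⟨e, j, he, by exact_mod_cast hper ▸ hS st hst, hn, hj, hje⟩
  choose! E J hEJ using hloop
  -- a state of period at most `p` is determined by a loop length `e ≤ p` and a residue mod `e`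
  have hinj : Set.InjOn (fun st => (⟨E st, J st % E st⟩ : Σ _ : ℕ, ℕ)) S := by
    have key : ∀ st ∈ S, ∀ st' ∈ S, E st = E st' → J st % E st = J st' % E st' →
        J st ≤ J st' → st = st' := by
      intro st hst st' hst' hE hmod hle
      obtain ⟨-, -, -, hj, hje⟩ := hEJ st hst
      obtain ⟨-, -, hn', hj', hje'⟩ := hEJ st' hst'
      rw [← hE] at hmod hn' hje'
      rw [← hj, ← hj', hs.eq_of_loops hle hmod hn' (hje.trans hj.symm) (hje'.trans hj'.symm)]
    intro st hst st' hst' heq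
    simp only [Sigma.mk.injEq, heq_eq_eq] at heq
    rcases le_total (J st) (J st') with hle | hle
    · exact key st hst st' hst' heq.1 heq.2 hle
    · exact (key st' hst' st hst heq.1.symm heq.2.symm hle).symm
  calc S.card ≤ ((range (p + 1)).sigma fun e => range e).card := by
        refine card_le_card_of_injOn _ (fun st hst => ?_) hinj
        obtain ⟨he, hep, -⟩ := hEJ st hst
        simp only [coe_sigma, Set.mem_sigma_iff, coe_range, Set.mem_Iio]
        exact ⟨by omega, Nat.mod_lt _ he⟩
    _ = p * (p + 1) / 2 := by
        rw [card_sigma]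
        simp only [card_range, sum_range_id, Nat.add_sub_cancel, mul_comm]

end IsUniqueAcceptingPath

theorem le_bSeq {f : ℕ → ℕ} (hf : Antitone f) {i p : ℕ} (h : i ≤ p * (p + 1) / 2) :
    f p + 1 ≤ bSeq f i :=
  Nat.succ_le_succ (hf (Nat.sInf_le h))

theorem stmt_13_general {α σ : Type*} (n : ℕ) (x : ℕ → α) (f : ℕ → ℕ) (hf : Antitone f)
    (hpow : ∀ j a u, 0 < a → j + u * a ≤ n →
      (∀ m < u * a, x (j + m) = x (j + m % a)) → u ≤ f a)
    (δ : σ → α → σ → Prop) (init : σ) (acc : Set σ) (s : ℕ → σ)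
    (hacc : NFAPath δ init acc n x s)
    (huniq : ∀ y p, NFAPath δ init acc n y p →
      (∀ i < n, y i = x i) ∧ (∀ i ≤ n, p i = s i))
    (Q : ℕ) (q : Fin Q → σ) (hinj : Function.Injective q)
    (hsorted : ∀ i j : Fin Q, i ≤ j → statePeriod n s (q i) ≤ statePeriod n s (q j))
    (a : Fin Q → ℕ) (ha : ∀ j : Fin Q, a j = {i | i ≤ n ∧ s i = q j}.ncard) :
    ∀ i : Fin Q, a i ≤ bSeq f ((i : ℕ) + 1) := by
  classical
  have hs : IsUniqueAcceptingPath δ init acc n x s := ⟨hacc, huniq⟩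
  intro i
  rw [ha, ncard_setOf_eq_card_occurrences]
  by_cases htop : statePeriod n s (q i) = ⊤
  · exact (card_occurrences_le_one htop).trans (Nat.le_add_left 1 _)
  obtain ⟨-, p, hp0, -, -, -, hp⟩ := exists_loop_eq_statePeriod htop
  obtain ⟨j, hjn, hpowj⟩ := hs.exists_pow_of_statePeriod_eq hp
  have hcard := hpow j p _ hp0 hjn hpowj
  have hindex : (i : ℕ) + 1 ≤ p * (p + 1) / 2 := by
    have := hs.card_le_of_statePeriod_le (S := (Iic i).image q) (p := p) (by
      simp only [mem_image, mem_Iic, forall_exists_index, and_imp]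
      rintro _ k hk rfl
      exact hp ▸ hsorted k i hk)
    rwa [card_image_of_injective _ hinj, Fin.card_Iic] at this
  have := le_bSeq hf hindex
  omega

/-- let `s` be the unique accepting path of length `n` of an NFA
accepting the word `x`, where every contiguous power `α^u` in `x` satisfies
`u ≤ f(|α|)` for a non-increasing `f`. If the distinct states `q₁,…,q_Q` of `s`
are ordered by increasing period and `a_i` is the number of occurrences of `q_i`
in `s`, then `a_i ≤ b_i` for each `i`. -/
theorem stmt_13 {α σ : Type*} (n : ℕ) (x : ℕ → α) (f : ℕ → ℕ) (hf : Antitone f)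
    (hpow : ∀ j a u, 0 < a → j + u * a ≤ n →
      (∀ m < u * a, x (j + m) = x (j + m % a)) → u ≤ f a)
    (δ : σ → α → σ → Prop) (init : σ) (acc : Set σ) (s : ℕ → σ)
    (hacc : NFAPath δ init acc n x s)
    (huniq : ∀ y p, NFAPath δ init acc n y p →
      (∀ i < n, y i = x i) ∧ (∀ i ≤ n, p i = s i))
    (Q : ℕ) (q : Fin Q → σ) (hinj : Function.Injective q)
    (hcover : ∀ i ≤ n, ∃ j : Fin Q, s i = q j)
    (hsorted : ∀ i j : Fin Q, i ≤ j → statePeriod n s (q i) ≤ statePeriod n s (q j))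
    (a : Fin Q → ℕ) (ha : ∀ j : Fin Q, a j = {i | i ≤ n ∧ s i = q j}.ncard) :
    ∀ i : Fin Q, a i ≤ bSeq f ((i : ℕ) + 1) :=
  stmt_13_general n x f hf hpow δ init acc s hacc huniq Q q hinj hsorted a ha
end
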